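/- Let ν₁ ≥ ν₂ ≥ ... ≥ ν₁₀ ≥ 0 and μ₁, ..., μ₁₀ ≥ 0 be real numbers with ∑μᵢ + ∑νⱼ = x and each μᵢ ≤ x/10. Suppose no sub-sum σ = ∑_{i∈I}μᵢ + ∑_{j∈J}νⱼ (over subsets I, J ⊆ {1,...,10}) lies in the interval [x/6 - ε, x/3 + ε], where 0 < ε < x/12. Then ν₁ + ν₂ ≥ 5x/6 + ε. -/

import Mathlib

/-!
Put `a = x/6 - ε` and `b = x/3 + ε`, so that `a + a < b`. If no sub-sum lies in `[a, b]`, then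
adding a term smaller than `a` to a sub-sum smaller than `a` gives a sub-sum smaller than
`a + a < b`, hence smaller than `a`: the sum of all terms below `a` is below `a`. Every `μᵢ ≤ x/10`
is below `a`, and so is every `νⱼ` with `j ≥ 2`, since otherwise `ν₁, ν₂, ν₃ > b` and
`ν₁ + ν₂ + ν₃ > x`. Hence `x - ν₁ - ν₂ < a`.
-/

open Finset

lemma lt_of_notMem_Icc_of_le {α : Type*} [LinearOrder α] {a b y : α} (hy : y ∉ Set.Icc a b)
    (hyb : y ≤ b) : y < a :=
  lt_of_not_ge fun hay => hy ⟨hay, hyb⟩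

lemma Finset.sum_lt_of_forall_lt_of_subsum_notMem_Icc {ι M : Type*} [AddCommMonoid M]
    [LinearOrder M] [IsOrderedCancelAddMonoid M] {f : ι → M} {a b : M}
    (ha : 0 < a) (hab : a + a ≤ b) {s : Finset ι}
    (hgap : ∀ t ⊆ s, ∑ i ∈ t, f i ∉ Set.Icc a b) (hs : ∀ i ∈ s, f i < a) :
    ∑ i ∈ s, f i < a := by
  classical
  induction s using Finset.induction_on with
  | empty => simpa using ha
  | insert i s hi ih =>
    have hsum_lt : ∑ j ∈ s, f j < a :=
      ih (fun t ht => hgap t (ht.trans (subset_insert i s)))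
        (fun j hj => hs j (mem_insert_of_mem hj))
    refine lt_of_notMem_Icc_of_le (hgap _ Subset.rfl) ?_
    rw [sum_insert hi]
    exact ((add_lt_add (hs i (mem_insert_self i s)) hsum_lt).trans_le hab).le

/-- Combinatorial lemma from the Heath–Brown identity optimization: if no
sub-sum of the `μᵢ, νⱼ` lies in `[x/6 - ε, x/3 + ε]`, then `ν₁ + ν₂ ≥ 5x/6 + ε`. -/
theorem stmt_17 (x ε : ℝ) (hε0 : 0 < ε) (hε : ε < x / 12)
    (μ ν : Fin 10 → ℝ)
    (hμ0 : ∀ i, 0 ≤ μ i) (hν0 : ∀ j, 0 ≤ ν j)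
    (hνmono : ∀ i j : Fin 10, i ≤ j → ν j ≤ ν i)
    (hμ : ∀ i, μ i ≤ x / 10)
    (hsum : ∑ i, μ i + ∑ j, ν j = x)
    (hnosub : ∀ I J : Finset (Fin 10),
      (∑ i ∈ I, μ i + ∑ j ∈ J, ν j) ∉ Set.Icc (x / 6 - ε) (x / 3 + ε)) :
    5 * x / 6 + ε ≤ ν 0 + ν 1 := by
  set a := x / 6 - ε with ha
  set b := x / 3 + ε with hb
  have hsingle_μ (i : Fin 10) : μ i ∉ Set.Icc a b := by simpa using hnosub {i} ∅
  have hsingle_ν (j : Fin 10) : ν j ∉ Set.Icc a b := by simpa using hnosub ∅ {j}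
  have hν_split : ∑ j, ν j = ν 0 + ν 1 + ∑ j ∈ {0, 1}ᶜ, ν j := by
    rw [← sum_add_sum_compl {0, 1}, sum_pair (by decide)]
  have hμ_small (i : Fin 10) : μ i < a :=
    lt_of_notMem_Icc_of_le (hsingle_μ i) (by linarith [hμ i])
  have hν2_small : ν 2 < a := by
    by_contra! h2
    have h2b : b < ν 2 := lt_of_not_ge fun h => hsingle_ν 2 ⟨h2, h⟩
    have h2_le_tail : ν 2 ≤ ∑ j ∈ ({0, 1}ᶜ : Finset (Fin 10)), ν j :=
      single_le_sum (fun j _ => hν0 j) (by decide)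
    have hμ_nonneg : 0 ≤ ∑ i, μ i := sum_nonneg fun i _ => hμ0 i
    linarith [hνmono 0 2 (by decide), hνmono 1 2 (by decide)]
  have hν_tail_small (j : Fin 10) (hj : j ∈ ({0, 1}ᶜ : Finset (Fin 10))) : ν j < a := by
    refine (hνmono 2 j ?_).trans_lt hν2_small
    simp only [mem_compl, mem_insert, mem_singleton, not_or] at hj
    omega
  have hrest : ∑ i, μ i + ∑ j ∈ {0, 1}ᶜ, ν j < a := by
    rw [← sum_sumElim]
    refine sum_lt_of_forall_lt_of_subsum_notMem_Icc (b := b) (by linarith) (by linarith)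
      (fun t _ => by rw [sum_sum_eq_sum_toLeft_add_sum_toRight]; exact hnosub _ _) ?_
    rintro (i | j) hij
    exacts [hμ_small i, hν_tail_small j (inr_mem_disjSum.mp hij)]
  linarith
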